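/- Let k be a field and S = k[[x,u]]/(u^2). For i ∈ ℕ let X_i be the ideal (x^i, u) of S, X_0 = S, and X_∞ = (u). Then each X_i with i ∈ ℕ ∪ {∞} is an indecomposable S-module, and X_i ≇ X_j for i ≠ j in ℕ ∪ {∞}. -/

import Mathlib

set_option synthInstance.maxHeartbeats 400000

open MvPowerSeries

/-- The `A_∞` curve singularity `S = k[[x,u]]/(u²)`. -/
abbrev Sring (k : Type*) [Field k] : Type _ :=
  MvPowerSeries (Fin 2) k ⧸ Ideal.span {(X 1 : MvPowerSeries (Fin 2) k) ^ 2}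

/-- The class of `x` in `S`. -/
noncomputable def Sx (k : Type*) [Field k] : Sring k :=
  Ideal.Quotient.mk _ (X 0)

/-- The class of `u` in `S`. -/
noncomputable def Su (k : Type*) [Field k] : Sring k :=
  Ideal.Quotient.mk _ (X 1)

/-- The ideals `X_i ⊆ S` for `i ∈ ℕ ∪ {∞}`: `X_i = (x^i, u)` for `i ∈ ℕ`
(so `X_0 = S`) and `X_∞ = (u)`. -/
noncomputable def Xideal (k : Type*) [Field k] : ℕ∞ → Ideal (Sring k) :=
  WithTop.recTopCoe (Ideal.span {Su k}) (fun i => Ideal.span {(Sx k) ^ i, Su k})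

/-- A module is indecomposable if it is nonzero and is not the (internal) direct sum of two
nonzero submodules. -/
def IsIndecomposableModule (R M : Type*) [Ring R] [AddCommGroup M] [Module R M] : Prop :=
  (∃ x : M, x ≠ 0) ∧ ∀ N₁ N₂ : Submodule R M, IsCompl N₁ N₂ → N₁ = ⊥ ∨ N₂ = ⊥

/-!
Everything rests on `u` being prime in `S` with annihilator `(u)`, which holds because `u` is
the image of the prime `X 1` of the domain `k[[x,u]]`. A nonzero ideal then contains a nonzero
multiple `u a` (either `u z` for some `z` in it, or `z = u a` itself), and two such multiples
`u a`, `u b` have the common nonzero multiple `u a b`; so nonzero ideals of `S` meet, and no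
ideal splits.

For `i < j`, the subquotient `(0 :_{X_i} u) / u X_i = (u) / (u x^i)` is killed by `x^i`. In `X_j`
this fails: `x^i u ∈ u X_j ⊆ u (x^(i+1), u)` would give `u ∣ x^i (1 - a x)`, while `u ∤ x` and
`1 - a x` is a unit.
-/

theorem MvPowerSeries.X_prime {σ R : Type*} [CommRing R] [NoZeroDivisors R] [Nontrivial R]
    (s : σ) : Prime (X s : MvPowerSeries σ R) := by
  let e : {t // t ≠ s} ↪ σ := Function.Embedding.subtype _
  -- `killCompl e` is the substitution `X s ↦ 0`
  have hdvd : ∀ φ : MvPowerSeries σ R, X s ∣ φ ↔ killCompl e φ = 0 := by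
    intro φ
    refine ⟨fun ⟨ψ, hψ⟩ => by rw [hψ, map_mul, killCompl_X_eq_zero (by simp [e]), zero_mul],
      fun h => X_dvd_iff.mpr fun m hm => ?_⟩
    obtain ⟨n, rfl⟩ : m ∈ Set.range (Finsupp.embDomain e) := by
      rw [Finsupp.mem_range_embDomain_iff]
      intro t ht
      exact ⟨⟨t, by rintro rfl; exact (Finsupp.mem_support_iff.mp ht) hm⟩, rfl⟩
    rw [← coeff_killCompl, h, map_zero]
  refine ⟨fun h => ?_, fun h => ?_, fun a b h => ?_⟩
  · simpa using congrArg (coeff (Finsupp.single s 1)) h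
  · simp [isUnit_iff_constantCoeff] at h
  · simpa only [hdvd, map_mul, mul_eq_zero] using h

section QuotientBySquare

variable {A : Type*} [CommRing A]

theorem Ideal.span_sq_le_span (p : A) : Ideal.span {p ^ 2} ≤ Ideal.span {p} :=
  Ideal.span_singleton_le_span_singleton.mpr (dvd_pow_self p two_ne_zero)

variable {p : A}

theorem Ideal.Quotient.mk_dvd_mk_iff_of_le_span {I : Ideal A} (hI : I ≤ Ideal.span {p}) {a : A} :
    Ideal.Quotient.mk I p ∣ Ideal.Quotient.mk I a ↔ p ∣ a := by
  constructor
  · rintro ⟨c, hc⟩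
    obtain ⟨c, rfl⟩ := Ideal.Quotient.mk_surjective c
    rw [← map_mul, Ideal.Quotient.eq] at hc
    simpa using (Ideal.mem_span_singleton.mp (hI hc)).add (dvd_mul_right p c)
  · rintro ⟨c, rfl⟩
    exact ⟨Ideal.Quotient.mk I c, map_mul _ _ _⟩

variable [NoZeroDivisors A]

theorem Ideal.Quotient.mk_mul_eq_zero_iff_mk_dvd (hp : p ≠ 0) (z : A ⧸ Ideal.span {p ^ 2}) :
    Ideal.Quotient.mk _ p * z = 0 ↔ Ideal.Quotient.mk _ p ∣ z := by
  obtain ⟨a, rfl⟩ := Ideal.Quotient.mk_surjective z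
  rw [Ideal.Quotient.mk_dvd_mk_iff_of_le_span (Ideal.span_sq_le_span p), ← map_mul,
    Ideal.Quotient.eq_zero_iff_mem, Ideal.mem_span_singleton, pow_two, mul_dvd_mul_iff_left hp]

theorem Ideal.Quotient.prime_mk_of_prime (hp : Prime p) :
    Prime (Ideal.Quotient.mk (Ideal.span {p ^ 2}) p) := by
  have hle := Ideal.span_sq_le_span p
  have hdvd_one : ¬Ideal.Quotient.mk (Ideal.span {p ^ 2}) p ∣ 1 := by
    rw [← map_one (Ideal.Quotient.mk _), Ideal.Quotient.mk_dvd_mk_iff_of_le_span hle]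
    exact fun h => hp.not_isUnit (isUnit_of_dvd_one h)
  refine ⟨fun h => hdvd_one ((Ideal.Quotient.mk_mul_eq_zero_iff_mk_dvd hp.ne_zero 1).mp
    (by rw [h, zero_mul])), fun h => hdvd_one h.dvd, fun a b h => ?_⟩
  obtain ⟨a, rfl⟩ := Ideal.Quotient.mk_surjective a
  obtain ⟨b, rfl⟩ := Ideal.Quotient.mk_surjective b
  rw [← map_mul, Ideal.Quotient.mk_dvd_mk_iff_of_le_span hle] at h
  simpa only [Ideal.Quotient.mk_dvd_mk_iff_of_le_span hle] using hp.dvd_or_dvd h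

end QuotientBySquare

theorem IsIndecomposableModule.of_forall_not_disjoint {R M : Type*} [Ring R] [AddCommGroup M]
    [Module R M] (h : ∀ N₁ N₂ : Submodule R M, N₁ ≠ ⊥ → N₂ ≠ ⊥ → ¬Disjoint N₁ N₂)
    {N : Submodule R M} (hN : N ≠ ⊥) : IsIndecomposableModule R N := by
  refine ⟨?_, fun N₁ N₂ hc => ?_⟩
  · obtain ⟨x, hx, hx0⟩ := Submodule.exists_mem_ne_zero_of_ne_bot hN
    exact ⟨⟨x, hx⟩, by simpa using hx0⟩
  · have hmap := Submodule.map_injective_of_injective N.injective_subtype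
    by_contra! hne
    refine h _ _ ?_ ?_ (Submodule.disjoint_map N.injective_subtype hc.disjoint)
    · simpa only [← Submodule.map_bot N.subtype] using hmap.ne hne.1
    · simpa only [← Submodule.map_bot N.subtype] using hmap.ne hne.2

section AnnihilatorIsSpan

variable {R : Type*} [CommRing R] {u : R}

theorem Ideal.exists_mul_mem_ne_zero (hann : ∀ z, u * z = 0 ↔ u ∣ z) {I : Ideal R} (hI : I ≠ ⊥) :
    ∃ a, u * a ∈ I ∧ u * a ≠ 0 := by
  obtain ⟨z, hzI, hz⟩ := Submodule.exists_mem_ne_zero_of_ne_bot hI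
  by_cases h : u * z = 0
  · obtain ⟨c, rfl⟩ := (hann z).mp h
    exact ⟨c, hzI, hz⟩
  · exact ⟨z, I.mul_mem_left u hzI, h⟩

theorem Ideal.not_disjoint_of_ne_bot (hu : Prime u) (hann : ∀ z, u * z = 0 ↔ u ∣ z) {I J : Ideal R}
    (hI : I ≠ ⊥) (hJ : J ≠ ⊥) : ¬Disjoint I J := by
  obtain ⟨a, haI, ha⟩ := Ideal.exists_mul_mem_ne_zero hann hI
  obtain ⟨b, hbJ, hb⟩ := Ideal.exists_mul_mem_ne_zero hann hJ
  have hab : u * (a * b) ≠ 0 := by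
    rw [Ne, hann]
    intro hdvd
    rcases hu.dvd_or_dvd hdvd with h | h
    exacts [ha ((hann a).mpr h), hb ((hann b).mpr h)]
  refine fun hIJ => hab (Submodule.disjoint_def.mp hIJ _ ?_ ?_)
  · rw [← mul_assoc]
    exact I.mul_mem_right b haI
  · rw [mul_left_comm]
    exact J.mul_mem_left a hbJ

def KillsAnnModSMul (y u : R) (M : Type*) [AddCommGroup M] [Module R M] : Prop :=
  ∀ m : M, u • m = 0 → ∃ m' : M, y • m = u • m'

theorem KillsAnnModSMul.of_linearEquiv {y : R} {M N : Type*} [AddCommGroup M] [Module R M]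
    [AddCommGroup N] [Module R N] (e : M ≃ₗ[R] N) (h : KillsAnnModSMul y u M) :
    KillsAnnModSMul y u N := by
  intro n hn
  obtain ⟨m', hm'⟩ := h (e.symm n) (by rw [← map_smul, hn, map_zero])
  exact ⟨e m', by rw [← map_smul, ← hm', map_smul, e.apply_symm_apply]⟩

theorem killsAnnModSMul_of_mem (hann : ∀ z, u * z = 0 → u ∣ z) {I : Ideal R} {y : R}
    (hy : y ∈ I) : KillsAnnModSMul y u I := by
  rintro ⟨m, hm⟩ hum
  obtain ⟨c, rfl⟩ := hann m (congrArg Subtype.val hum)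
  exact ⟨⟨y * c, I.mul_mem_right c hy⟩, Subtype.ext (mul_left_comm y u c)⟩

theorem not_killsAnnModSMul (hu : Prime u) (hann : ∀ z, u * z = 0 ↔ u ∣ z) {x y : R}
    (hy : ¬u ∣ y) (hx : x ∈ (⊥ : Ideal R).jacobson) {I : Ideal R} (huI : u ∈ I)
    (hI : I ≤ Ideal.span {y * x, u}) : ¬KillsAnnModSMul y u I := by
  have hsq : u * u = 0 := (hann u).mpr dvd_rfl
  intro h
  obtain ⟨⟨m, hm⟩, hym⟩ := h ⟨u, huI⟩ (Subtype.ext hsq)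
  obtain ⟨a, b, rfl⟩ := Ideal.mem_span_pair.mp (hI hm)
  have hkill : u * (y * (1 - a * x)) = 0 := by
    have hval : y * u = u * (a * (y * x) + b * u) := congrArg Subtype.val hym
    linear_combination hval + b * hsq
  rcases hu.dvd_or_dvd ((hann _).mp hkill) with h | h
  · exact hy h
  · refine hu.not_isUnit (isUnit_of_dvd_unit h ?_)
    simpa [mul_comm, sub_eq_add_neg, add_comm] using Ideal.mem_jacobson_bot.mp hx (-a)

end AnnihilatorIsSpan

section Sring

variable (k : Type*) [Field k]

theorem prime_Su : Prime (Su k) :=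
  Ideal.Quotient.prime_mk_of_prime (X_prime 1)

theorem Su_mul_eq_zero_iff (z : Sring k) : Su k * z = 0 ↔ Su k ∣ z :=
  Ideal.Quotient.mk_mul_eq_zero_iff_mk_dvd (X_prime 1).ne_zero z

theorem not_Su_dvd_Sx : ¬Su k ∣ Sx k := by
  rw [Su, Sx, Ideal.Quotient.mk_dvd_mk_iff_of_le_span (Ideal.span_sq_le_span _), X_dvd_iff]
  push Not
  exact ⟨Finsupp.single 0 1, by simp, by simp [coeff_X]⟩

theorem Sx_mem_jacobson_bot : Sx k ∈ (⊥ : Ideal (Sring k)).jacobson := by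
  refine Ideal.mem_jacobson_bot.mpr fun y => ?_
  obtain ⟨y, rfl⟩ := Ideal.Quotient.mk_surjective y
  have : IsUnit (X 0 * y + 1 : MvPowerSeries (Fin 2) k) := by simp [isUnit_iff_constantCoeff]
  rw [Sx, ← map_mul, ← map_one (Ideal.Quotient.mk _), ← map_add]
  exact this.map _

theorem Su_mem_Xideal (i : ℕ∞) : Su k ∈ Xideal k i := by
  induction i using ENat.recTopCoe with
  | top => exact Ideal.subset_span rfl
  | coe i => exact Ideal.subset_span (Set.mem_insert_of_mem _ rfl)

theorem Sx_pow_mem_Xideal (i : ℕ) : Sx k ^ i ∈ Xideal k i :=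
  Ideal.subset_span (Set.mem_insert _ _)

theorem Xideal_antitone : Antitone (Xideal k) := by
  intro i j hij
  induction j using ENat.recTopCoe with
  | top => exact Ideal.span_le.mpr (Set.singleton_subset_iff.mpr (Su_mem_Xideal k i))
  | coe j =>
    lift i to ℕ using ne_top_of_le_ne_top WithTop.coe_ne_top hij
    refine Ideal.span_le.mpr (Set.insert_subset_iff.mpr
      ⟨?_, Set.singleton_subset_iff.mpr (Su_mem_Xideal k i)⟩)
    rw [← Nat.sub_add_cancel (by exact_mod_cast hij : i ≤ j), pow_add]
    exact Ideal.mul_mem_left _ _ (Sx_pow_mem_Xideal k i)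

theorem isIndecomposableModule_Xideal (i : ℕ∞) : IsIndecomposableModule (Sring k) (Xideal k i) :=
  IsIndecomposableModule.of_forall_not_disjoint
    (fun _ _ => Ideal.not_disjoint_of_ne_bot (prime_Su k) (Su_mul_eq_zero_iff k))
    ((Submodule.ne_bot_iff _).mpr ⟨_, Su_mem_Xideal k i, (prime_Su k).ne_zero⟩)

theorem isEmpty_linearEquiv_Xideal_of_lt {i : ℕ} {j : ℕ∞} (hij : (i : ℕ∞) < j) :
    IsEmpty (Xideal k i ≃ₗ[Sring k] Xideal k j) := by
  have hann := Su_mul_eq_zero_iff k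
  have hXj : Xideal k j ≤ Ideal.span {Sx k ^ i * Sx k, Su k} := by
    rw [← pow_succ]
    exact Xideal_antitone k (Order.add_one_le_of_lt hij)
  refine ⟨fun φ => not_killsAnnModSMul (prime_Su k) hann
    (fun h => not_Su_dvd_Sx k ((prime_Su k).dvd_of_dvd_pow h)) (Sx_mem_jacobson_bot k)
    (Su_mem_Xideal k j) hXj ?_⟩
  exact (killsAnnModSMul_of_mem (fun z => (hann z).mp) (Sx_pow_mem_Xideal k i)).of_linearEquiv φ

end Sring

/-- Let `k` be a field and `S = k[[x,u]]/(u²)`.  For `i ∈ ℕ` let `X_i` be the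
ideal `(x^i, u)` of `S` (so `X_0 = S`) and let `X_∞ = (u)`.  Then each `X_i` with
`i ∈ ℕ ∪ {∞}` is an indecomposable `S`-module, and `X_i ≇ X_j` for `i ≠ j` in `ℕ ∪ {∞}`. -/
theorem Xideal_indecomposable_and_pairwise_nonisomorphic (k : Type*) [Field k] :
    (∀ i : ℕ∞, IsIndecomposableModule (Sring k) (Xideal k i)) ∧
    (∀ i j : ℕ∞, i ≠ j → IsEmpty ((Xideal k i) ≃ₗ[Sring k] (Xideal k j))) := by
  refine ⟨isIndecomposableModule_Xideal k, fun i j hij => ?_⟩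
  wlog hlt : i < j generalizing i j
  · have := this j i hij.symm (hij.lt_or_gt.resolve_left hlt)
    exact ⟨fun φ => this.false φ.symm⟩
  lift i to ℕ using hlt.ne_top
  exact isEmpty_linearEquiv_Xideal_of_lt k hlt
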